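/- For a positive proper policy p over a finite alphabet 𝒶 and any node n* with cost c = d(n*)/π(n*), the frontier L'(n*) of N̄(n*) = {n ∈ List 𝒶 : d(n)/π(n) ≤ c} (the set of nodes outside N̄(n*) whose parent lies in N̄(n*)) is finite and carries total probability mass one: Σ_{n ∈ L'(n*)} π(n) = 1. -/
import Mathlib


/-- The probability `π(n)` of a node (a list of actions), given a conditional
policy `p`. -/
noncomputable def nodeProb {α : Type*} (p : List α → α → ℝ) (n : List α) : ℝ :=
  ∏ j : Fin n.length, p (n.take j) (n.get j)

lemma nodeProb_nil {α : Type*} (p : List α → α → ℝ) : nodeProb p [] = 1 := by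
  simp [nodeProb]

lemma nodeProb_append {α : Type*} (p : List α → α → ℝ) (m : List α) (a : α) :
    nodeProb p (m ++ [a]) = nodeProb p m * p m a := by
  unfold nodeProb
  rw [Finset.prod_fin_eq_prod_range, Finset.prod_fin_eq_prod_range]
  simp only [List.length_append, List.length_singleton]
  rw [Finset.prod_range_succ]
  congr 1
  · apply Finset.prod_congr rfl
    intro i hi
    simp only [Finset.mem_range] at hi
    rw [dif_pos (by omega), dif_pos hi]
    congr 1
    · exact List.take_append_of_le_length (by omega)
    · simp [List.getElem_append_left, hi]
  · rw [dif_pos (by omega)]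
    congr 1
    · simp [List.take_append_of_le_length]
    · simp

open Classical in
noncomputable def ftr {α : Type*} [Fintype α] (T : Finset (List α)) : Finset (List α) :=
  (T.biUnion (fun m => Finset.univ.image (fun a => m ++ [a]))) \ T

open Classical in
lemma mem_ftr {α : Type*} [Fintype α] {T : Finset (List α)} {n : List α} :
    n ∈ ftr T ↔ (n ≠ [] ∧ n.dropLast ∈ T) ∧ n ∉ T := by
  simp only [ftr, Finset.mem_sdiff, Finset.mem_biUnion, Finset.mem_image, Finset.mem_univ,
    true_and]
  constructor
  · rintro ⟨⟨m, hm, a, rfl⟩, h2⟩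
    exact ⟨⟨by simp, by simpa [List.dropLast_concat] using hm⟩, h2⟩
  · rintro ⟨⟨h1, h2⟩, h3⟩
    exact ⟨⟨n.dropLast, h2, n.getLast h1, List.dropLast_append_getLast h1⟩, h3⟩

open Classical in
lemma ftr_sum {α : Type*} [Fintype α] (p : List α → α → ℝ)
    (hproper : ∀ n, ∑ a : α, p n a = 1) :
    ∀ T : Finset (List α), [] ∈ T → (∀ n ∈ T, n.dropLast ∈ T) →
      ∑ n ∈ ftr T, nodeProb p n = 1 := by
  intro T
  induction T using Finset.strongInductionOn with
  | _ T ih =>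
    intro hroot hclosed
    obtain ⟨m, hmT, hmax⟩ := T.exists_max_image List.length ⟨[], hroot⟩
    by_cases hm : m = []
    · -- T = {[]}
      have hT : T = {[]} := by
        apply Finset.eq_singleton_iff_unique_mem.mpr
        refine ⟨hroot, fun n hn => ?_⟩
        have := hmax n hn
        rw [hm] at this
        exact List.eq_nil_of_length_eq_zero (by simpa using this)
      have hftr : ftr T = Finset.univ.image (fun a => ([a] : List α)) := by
        ext n
        rw [mem_ftr]
        simp only [hT, Finset.mem_singleton, Finset.mem_image, Finset.mem_univ, true_and]
        constructor
        · rintro ⟨⟨h1, h2⟩, h3⟩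
          refine ⟨n.getLast h1, ?_⟩
          conv_rhs => rw [← List.dropLast_append_getLast h1, h2]
          simp
        · rintro ⟨a, rfl⟩
          simp
      rw [hftr, Finset.sum_image (by intro a _ b _ h; simpa using h)]
      have : ∀ a : α, nodeProb p [a] = p [] a := by
        intro a
        have := nodeProb_append p [] a
        simpa [nodeProb_nil] using this
      simp only [this]
      exact hproper []
    · -- inductive step: remove m
      set T' := T.erase m with hT'
      have hmlen : 0 < m.length := List.length_pos_iff.mpr hm
      have hroot' : [] ∈ T' := Finset.mem_erase.mpr ⟨fun h => hm h.symm, hroot⟩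
      have hclosed' : ∀ n ∈ T', n.dropLast ∈ T' := by
        intro n hn
        have hnT : n ∈ T := Finset.mem_of_mem_erase hn
        refine Finset.mem_erase.mpr ⟨?_, hclosed n hnT⟩
        intro hdm
        by_cases hne : n = []
        · subst hne; simp at hdm; exact hm hdm
        · have : n.dropLast.length = n.length - 1 := by simp
          have h1 := hmax n hnT
          rw [← hdm] at h1
          have := List.length_pos_iff.mpr hne
          omega
      have hsum' := ih T' (Finset.erase_ssubset hmT) hroot' hclosed'
      -- m ∈ ftr T'
      have hmftr : m ∈ ftr T' := by
        rw [mem_ftr]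
        refine ⟨⟨hm, ?_⟩, Finset.notMem_erase m T⟩
        refine Finset.mem_erase.mpr ⟨?_, hclosed m hmT⟩
        intro h
        have : m.dropLast.length = m.length - 1 := by simp
        rw [h] at this
        omega
      -- children of m not in T
      have hchild_notT : ∀ a : α, m ++ [a] ∉ T := by
        intro a ha
        have := hmax _ ha
        simp at this
      -- decomposition
      have hdecomp : ftr T = (ftr T').erase m ∪ Finset.univ.image (fun a => m ++ [a]) := by
        ext n
        rw [Finset.mem_union, Finset.mem_erase, mem_ftr, mem_ftr]
        simp only [Finset.mem_image, Finset.mem_univ, true_and]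
        constructor
        · rintro ⟨⟨h1, h2⟩, h3⟩
          by_cases hdl : n.dropLast = m
          · right
            exact ⟨n.getLast h1, by rw [← hdl]; exact List.dropLast_append_getLast h1⟩
          · left
            refine ⟨fun h => h3 (h ▸ hmT), ⟨h1, Finset.mem_erase.mpr ⟨hdl, h2⟩⟩, ?_⟩
            exact fun h => h3 (Finset.mem_of_mem_erase h)
        · rintro (⟨hne, ⟨h1, h2⟩, h3⟩ | ⟨a, rfl⟩)
          · refine ⟨⟨h1, Finset.mem_of_mem_erase h2⟩, ?_⟩
            intro hnT
            exact h3 (Finset.mem_erase.mpr ⟨hne, hnT⟩)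
          · exact ⟨⟨by simp, by simp [List.dropLast_concat, hmT]⟩, hchild_notT a⟩
      have hdisj : Disjoint ((ftr T').erase m) (Finset.univ.image (fun a => m ++ [a])) := by
        rw [Finset.disjoint_right]
        rintro n hn hn'
        simp only [Finset.mem_image, Finset.mem_univ, true_and] at hn
        obtain ⟨a, rfl⟩ := hn
        have := (mem_ftr.mp (Finset.mem_of_mem_erase hn')).1.2
        rw [List.dropLast_concat] at this
        exact Finset.notMem_erase m T this
      rw [hdecomp, Finset.sum_union hdisj,
        Finset.sum_erase_eq_sub hmftr, hsum',
        Finset.sum_image (by intro a _ b _ h; simpa using h)]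
      have : ∀ a : α, nodeProb p (m ++ [a]) = nodeProb p m * p m a := fun a => nodeProb_append p m a
      simp only [this]
      rw [← Finset.mul_sum, hproper m]
      ring

lemma nodeProb_pos {α : Type*} (p : List α → α → ℝ) (hpos : ∀ n a, 0 < p n a) (n : List α) :
    0 < nodeProb p n :=
  Finset.prod_pos fun _ _ => hpos _ _

lemma p_le_one {α : Type*} [Fintype α] (p : List α → α → ℝ) (hpos : ∀ n a, 0 < p n a)
    (hproper : ∀ n, ∑ a : α, p n a = 1) (n : List α) (a : α) : p n a ≤ 1 := by
  rw [← hproper n]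
  exact Finset.single_le_sum (fun b _ => (hpos n b).le) (Finset.mem_univ a)

lemma nodeProb_le_one {α : Type*} [Fintype α] (p : List α → α → ℝ) (hpos : ∀ n a, 0 < p n a)
    (hproper : ∀ n, ∑ a : α, p n a = 1) (n : List α) : nodeProb p n ≤ 1 :=
  Finset.prod_le_one (fun _ _ => (hpos _ _).le) (fun _ _ => p_le_one p hpos hproper _ _)

/-- For a positive proper policy `p` and any node `n*` with cost
`c = d(n*)/π(n*)`, the frontier of `N̄(n*) = {n : d(n)/π(n) ≤ c}` (the set of
nodes outside `N̄(n*)` whose parent lies in `N̄(n*)`) is finite and carries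
total probability mass one. -/
theorem frontier_prob_sum_eq_one {α : Type*} [Fintype α] [Nonempty α]
    (p : List α → α → ℝ)
    (hpos : ∀ n a, 0 < p n a)
    (hproper : ∀ n, ∑ a : α, p n a = 1)
    (nstar : List α)
    (c : ℝ) (hc : c = (nstar.length : ℝ) / nodeProb p nstar)
    (N L : Set (List α))
    (hN : N = {n : List α | (n.length : ℝ) / nodeProb p n ≤ c})
    (hL : L = {n : List α | n ∉ N ∧ n.dropLast ∈ N}) :
    L.Finite ∧ ∑ᶠ n ∈ L, nodeProb p n = 1 := by
  have hcnn : 0 ≤ c := by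
    rw [hc]
    exact div_nonneg (Nat.cast_nonneg _) (nodeProb_pos p hpos _).le
  have hrootN : ([] : List α) ∈ N := by
    rw [hN]
    simp [nodeProb_nil, hcnn]
  -- N is closed under dropLast
  have hclosedN : ∀ n ∈ N, n.dropLast ∈ N := by
    intro n hn
    by_cases hne : n = []
    · subst hne; simpa using hrootN
    · rw [hN] at hn ⊢
      simp only [Set.mem_setOf_eq] at hn ⊢
      have hkey : nodeProb p n ≤ nodeProb p n.dropLast := by
        conv_lhs => rw [← List.dropLast_append_getLast hne]
        rw [nodeProb_append]
        nlinarith [nodeProb_pos p hpos n.dropLast,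
          p_le_one p hpos hproper n.dropLast (n.getLast hne), hpos n.dropLast (n.getLast hne)]
      calc ((n.dropLast.length : ℝ)) / nodeProb p n.dropLast
          ≤ (n.length : ℝ) / nodeProb p n := by
            gcongr
            · exact nodeProb_pos p hpos n
            · rw [List.length_dropLast]; omega
        _ ≤ c := hn
  -- N is finite
  have hNfin : N.Finite := by
    apply Set.Finite.subset (List.finite_length_le α ⌈c⌉₊)
    intro n hn
    rw [hN] at hn
    simp only [Set.mem_setOf_eq] at hn ⊢
    have h1 : (n.length : ℝ) ≤ c * nodeProb p n := by
      rw [div_le_iff₀ (nodeProb_pos p hpos n)] at hn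
      exact hn
    have h2 : c * nodeProb p n ≤ c :=
      mul_le_of_le_one_right hcnn (nodeProb_le_one p hpos hproper n)
    have : (n.length : ℝ) ≤ c := h1.trans h2
    exact Nat.cast_le.mp (this.trans (Nat.le_ceil c))
  set T : Finset (List α) := hNfin.toFinset with hT
  have hmemT : ∀ n : List α, n ∈ T ↔ n ∈ N := fun n => Set.Finite.mem_toFinset hNfin
  have hsum := ftr_sum p hproper T ((hmemT []).mpr hrootN)
    (fun n hn => (hmemT _).mpr (hclosedN n ((hmemT n).mp hn)))
  have hLeq : L = ↑(ftr T) := by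
    ext n
    rw [hL, Set.mem_setOf_eq, Finset.mem_coe, mem_ftr, hmemT, hmemT]
    constructor
    · rintro ⟨h1, h2⟩
      exact ⟨⟨fun h => h1 (h ▸ hrootN), h2⟩, h1⟩
    · rintro ⟨⟨_, h2⟩, h3⟩
      exact ⟨h3, h2⟩
  refine ⟨hLeq ▸ (ftr T).finite_toSet, ?_⟩
  rw [hLeq, finsum_mem_coe_finset]
  exact hsum
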